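/- In the setting of Theorem 4.4's proof: if property (⊛) holds — for each U⃗-tree T ⊆ T̃, each k, and the unique i < p_{n_k} with A_i = T↾n_k, and every j ≤ k: j ∈ f([T]) iff j ∈ f([T̃ ∩ B̂^{n_k}_i]) — then f is basic on the U⃗-trees contained in T̃; i.e., the map f̂(T↾n_k) := f([T̃ ∩ B̂^{n_k}_i]) ∩ (k+1) is level preserving, end-extension preserving, monotone, and generates f. -/

import Mathlib

/-- `a` is an initial segment of `b` (with respect to increasing enumerations). -/
def FinInitSeg (a b : Finset ℕ) : Prop :=
  a ⊆ b ∧ ∀ x ∈ b, ∀ y ∈ a, x ≤ y → x ∈ a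

/-- `a` is an initial segment of the (infinite) set `X`. -/
def FinInitSegSet (a : Finset ℕ) (X : Set ℕ) : Prop :=
  (↑a : Set ℕ) ⊆ X ∧ ∀ x ∈ X, ∀ y ∈ a, x ≤ y → x ∈ a

/-- `B` is a front on `I`. -/
def IsFront (I : Set ℕ) (B : Set (Finset ℕ)) : Prop :=
  (∀ b ∈ B, (↑b : Set ℕ) ⊆ I) ∧
  (∀ a ∈ B, ∀ b ∈ B, FinInitSeg a b → a = b) ∧
  (∀ X : Set ℕ, X ⊆ I → X.Infinite → ∃ b ∈ B, FinInitSegSet b X)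

/-- `B` is a flat-top front on `I`. -/
def IsFlatTop (I : Set ℕ) (B : Set (Finset ℕ)) : Prop :=
  IsFront I B ∧ B ≠ {(∅ : Finset ℕ)} ∧
  (B = {c : Finset ℕ | c.card = 1 ∧ (↑c : Set ℕ) ⊆ I} ∨
    ((∀ b ∈ B, 2 ≤ b.card) ∧
     ∀ b ∈ B, ∀ m : ℕ, b.max = (m : WithBot ℕ) →
       ((∀ c ∈ B, FinInitSeg (b.erase m) c → b.erase m ≠ c →
           ∃ x ∈ I, (∀ y ∈ b.erase m, y < x) ∧ c = insert x (b.erase m)) ∧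
        (∀ x ∈ I, (∀ y ∈ b.erase m, y < x) → insert x (b.erase m) ∈ B))))

/-- `B̂`: the tree of all initial segments of members of `B`. -/
def Bhat (B : Set (Finset ℕ)) : Set (Finset ℕ) :=
  {a | ∃ b ∈ B, FinInitSeg a b}

/-- A `U⃗`-tree over the front `B`. -/
def IsUTree (B : Set (Finset ℕ)) (Uc : Finset ℕ → Ultrafilter ℕ)
    (T : Set (Finset ℕ)) : Prop :=
  T ⊆ Bhat B ∧ ∅ ∈ T ∧
  (∀ b ∈ T, ∀ a : Finset ℕ, FinInitSeg a b → a ∈ T) ∧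
  (∀ c ∈ T, c ∈ Bhat B \ B → {n : ℕ | insert n c ∈ T} ∈ Uc c)

/-- `[T]`: the set of maximal branches through `T`. -/
def maxBr (T : Set (Finset ℕ)) : Set (Finset ℕ) :=
  {c | c ∈ T ∧ ∀ c' ∈ T, FinInitSeg c c' → c = c'}

/-- `U` is a nonprincipal ultrafilter. -/
def NonPrincipal (U : Ultrafilter ℕ) : Prop := ∀ a : ℕ, U ≠ pure a

/-- `T↾k`: the members of `T` with all entries below `k`. -/
def Trestrict (T : Set (Finset ℕ)) (k : ℕ) : Set (Finset ℕ) :=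
  {a | a ∈ T ∧ ∀ x ∈ a, x < k}

/-- `B̂^k_A`: the maximal tree whose restriction below `k` is `A`, i.e. `A` together
with all `b ∈ B̂` properly end-extending some `a ∈ A` with `min(b \ a) > k`. -/
def BhatKI (B : Set (Finset ℕ)) (k : ℕ) (A : Set (Finset ℕ)) : Set (Finset ℕ) :=
  A ∪ {b | b ∈ Bhat B ∧ ∃ a ∈ A, FinInitSeg a b ∧ a ≠ b ∧
        ∀ x ∈ b, x ∉ a → k < x}

/-!
By (⊛), `f̂(T↾n_k) = f([T]) ∩ [0, k]` for every `U⃗`-tree `T ⊆ T̃`, which makes `f̂` level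
preserving, end-extension preserving and generating at once. For monotonicity, if
`S↾n_k ⊆ T↾n_l` then `S↾n_k ⊆ T↾n_k`, hence
`T̃ ∩ B̂^{n_k}_{S↾n_k} ⊆ T̃ ∩ B̂^{n_k}_{T↾n_k}`. Both trees are closed under all large enough
one-point end-extensions, so by nonprincipality their maximal branches are exactly their
members in `B`, and `f` is monotone.
-/

open Set Filter

lemma FinInitSeg.trans {a b c : Finset ℕ} (hab : FinInitSeg a b) (hbc : FinInitSeg b c) :
    FinInitSeg a c :=
  ⟨hab.1.trans hbc.1, fun x hx y hy hxy => hab.2 x (hbc.2 x hx y (hab.1 hy) hxy) y hy hxy⟩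

lemma finInitSeg_insert {c : Finset ℕ} {x : ℕ} (hcx : ∀ y ∈ c, y < x) :
    FinInitSeg c (insert x c) := by
  refine ⟨Finset.subset_insert x c, fun z hz y hy hzy => ?_⟩
  rcases Finset.mem_insert.mp hz with rfl | hzc
  · exact absurd (hcx y hy) hzy.not_gt
  · exact hzc

lemma NonPrincipal.le_atTop {U : Ultrafilter ℕ} (hU : NonPrincipal U) :
    (U : Filter ℕ) ≤ atTop :=
  (U.le_cofinite_or_eq_pure.resolve_right fun ⟨a, ha⟩ => hU a ha).trans_eq Nat.cofinite_eq_atTop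

lemma BhatKI_mono (B : Set (Finset ℕ)) (m : ℕ) {A A' : Set (Finset ℕ)} (h : A ⊆ A') :
    BhatKI B m A ⊆ BhatKI B m A' := by
  rintro b (hb | ⟨hbB, a, ha, hab⟩)
  · exact Or.inl (h hb)
  · exact Or.inr ⟨hbB, a, h ha, hab⟩

section maxBr

variable {I : Set ℕ} {B T : Set (Finset ℕ)} {Uc : Finset ℕ → Ultrafilter ℕ} {c : Finset ℕ}

lemma mem_of_mem_maxBr (hUc : ∀ c, NonPrincipal (Uc c)) (hT : T ⊆ Bhat B)
    (hsucc : ∀ c ∈ T, c ∈ Bhat B \ B → {x | insert x c ∈ T} ∈ Uc c) (hc : c ∈ maxBr T) :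
    c ∈ B := by
  by_contra hcB
  obtain ⟨x, hxT, hcx⟩ :=
    (Filter.Eventually.and (Ultrafilter.mem_coe.2 (hsucc c hc.1 ⟨hT hc.1, hcB⟩))
      ((hUc c).le_atTop (eventually_gt_atTop (c.sup id)))).exists
  have hlt : ∀ y ∈ c, y < x := fun y hy => (Finset.le_sup (f := id) hy).trans_lt hcx
  have hxc : x ∈ c := (hc.2 _ hxT (finInitSeg_insert hlt)) ▸ Finset.mem_insert_self x c
  exact (hlt x hxc).false

lemma mem_maxBr_of_mem (hfront : IsFront I B) (hT : T ⊆ Bhat B) (hcT : c ∈ T)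
    (hcB : c ∈ B) : c ∈ maxBr T := by
  refine ⟨hcT, fun c' hc' hcc' => ?_⟩
  obtain ⟨b, hb, hc'b⟩ := hT hc'
  obtain rfl : c = b := hfront.2.1 c hcB b hb (hcc'.trans hc'b)
  exact Finset.Subset.antisymm hcc'.1 hc'b.1

lemma maxBr_mono_of_succ {S : Set (Finset ℕ)} (hfront : IsFront I B)
    (hUc : ∀ c, NonPrincipal (Uc c)) (hS : S ⊆ Bhat B)
    (hSsucc : ∀ c ∈ S, c ∈ Bhat B \ B → {x | insert x c ∈ S} ∈ Uc c) (hT : T ⊆ Bhat B)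
    (hST : S ⊆ T) : maxBr S ⊆ maxBr T :=
  fun _ hc => mem_maxBr_of_mem hfront hT (hST hc.1) (mem_of_mem_maxBr hUc hS hSsucc hc)

end maxBr

section BhatKI

variable {B Ttil : Set (Finset ℕ)} {Uc : Finset ℕ → Ultrafilter ℕ}

lemma inter_BhatKI_succ (hUc : ∀ c, NonPrincipal (Uc c)) (hTtil : IsUTree B Uc Ttil) (m : ℕ)
    (A : Set (Finset ℕ)) :
    ∀ c ∈ Ttil ∩ BhatKI B m A, c ∈ Bhat B \ B →
      {x | insert x c ∈ Ttil ∩ BhatKI B m A} ∈ Uc c := by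
  rintro c ⟨hcT, hcK⟩ hc
  obtain ⟨a, haA, hac, hnew⟩ : ∃ a ∈ A, FinInitSeg a c ∧ ∀ y ∈ c, y ∉ a → m < y := by
    rcases hcK with hcA | ⟨-, a, haA, hac, -, hnew⟩
    exacts [⟨c, hcA, ⟨subset_rfl, fun y hy _ _ _ => hy⟩, fun y hy hyc => absurd hy hyc⟩,
      ⟨a, haA, hac, hnew⟩]
  filter_upwards [Ultrafilter.mem_coe.2 (hTtil.2.2.2 c hcT hc),
    (hUc c).le_atTop (eventually_gt_atTop (max (c.sup id) m))] with x hxT hx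
  have hcx : ∀ y ∈ c, y < x := fun y hy =>
    ((Finset.le_sup (f := id) hy).trans (le_max_left _ _)).trans_lt hx
  have hxc : x ∉ c := fun h => (hcx x h).false
  refine ⟨hxT, Or.inr ⟨hTtil.1 hxT, a, haA, hac.trans (finInitSeg_insert hcx),
    fun h => hxc (hac.1 (h ▸ Finset.mem_insert_self x c)), fun y hy hya => ?_⟩⟩
  rcases Finset.mem_insert.mp hy with rfl | hyc
  exacts [(le_max_right _ _).trans_lt hx, hnew y hyc hya]

lemma maxBr_inter_BhatKI_mono (hfront : IsFront Set.univ B) (hUc : ∀ c, NonPrincipal (Uc c))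
    (hTtil : IsUTree B Uc Ttil) {m : ℕ} {A A' : Set (Finset ℕ)} (hAA' : A ⊆ A') :
    maxBr (Ttil ∩ BhatKI B m A) ⊆ maxBr (Ttil ∩ BhatKI B m A') :=
  maxBr_mono_of_succ hfront hUc (inter_subset_left.trans hTtil.1)
    (inter_BhatKI_succ hUc hTtil m A) (inter_subset_left.trans hTtil.1)
    (inter_subset_inter_right _ (BhatKI_mono B m hAA'))

end BhatKI

theorem circledast_implies_basic_general
    (B : Set (Finset ℕ)) (hB : IsFlatTop Set.univ B)
    (Uc : Finset ℕ → Ultrafilter ℕ) (hUc : ∀ c, NonPrincipal (Uc c))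
    (Ttil : Set (Finset ℕ)) (hTtil : IsUTree B Uc Ttil)
    (f : Set (Finset ℕ) → Set ℕ)
    (hfmono : ∀ X Y : Set (Finset ℕ), X ⊆ Y → f X ⊆ f Y)
    (n : ℕ → ℕ)
    (A : ℕ → Set (Finset ℕ)) (p : ℕ → ℕ)
    (hA : ∀ T : Set (Finset ℕ), IsUTree B Uc T → T ⊆ Ttil → ∀ k : ℕ,
      ∃! i : ℕ, i < p (n k) ∧ A i = Trestrict T (n k))
    (hstar : ∀ T : Set (Finset ℕ), IsUTree B Uc T → T ⊆ Ttil → ∀ k : ℕ,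
      ∀ i : ℕ, i < p (n k) → A i = Trestrict T (n k) → ∀ j ≤ k,
        (j ∈ f (maxBr T) ↔ j ∈ f (maxBr (Ttil ∩ BhatKI B (n k) (A i)))))
    (fh : Set (Finset ℕ) → Set ℕ)
    (hfh : ∀ T : Set (Finset ℕ), IsUTree B Uc T → T ⊆ Ttil → ∀ k : ℕ,
      ∀ i : ℕ, i < p (n k) → A i = Trestrict T (n k) →
        fh (Trestrict T (n k)) =
          f (maxBr (Ttil ∩ BhatKI B (n k) (A i))) ∩ Set.Iic k) :
    (∀ T : Set (Finset ℕ), IsUTree B Uc T → T ⊆ Ttil → ∀ k : ℕ,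
      fh (Trestrict T (n k)) ⊆ Set.Iic k) ∧
    (∀ T : Set (Finset ℕ), IsUTree B Uc T → T ⊆ Ttil → ∀ k l : ℕ, k ≤ l →
      fh (Trestrict T (n k)) = fh (Trestrict T (n l)) ∩ Set.Iic k) ∧
    (∀ S T : Set (Finset ℕ), IsUTree B Uc S → IsUTree B Uc T →
      S ⊆ Ttil → T ⊆ Ttil → ∀ k l : ℕ, k ≤ l →
        Trestrict S (n k) ⊆ Trestrict T (n l) →
        fh (Trestrict S (n k)) ⊆ fh (Trestrict T (n l))) ∧
    (∀ T : Set (Finset ℕ), IsUTree B Uc T → T ⊆ Ttil →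
      f (maxBr T) = ⋃ k : ℕ, fh (Trestrict T (n k))) := by
  have hfh_local : ∀ T, IsUTree B Uc T → T ⊆ Ttil → ∀ k, fh (Trestrict T (n k)) =
      f (maxBr (Ttil ∩ BhatKI B (n k) (Trestrict T (n k)))) ∩ Iic k := by
    intro T hT hTs k
    obtain ⟨i, ⟨hip, hiA⟩, -⟩ := hA T hT hTs k
    rw [hfh T hT hTs k i hip hiA, hiA]
  have hfh_eq : ∀ T, IsUTree B Uc T → T ⊆ Ttil → ∀ k,
      fh (Trestrict T (n k)) = f (maxBr T) ∩ Iic k := by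
    intro T hT hTs k
    obtain ⟨i, ⟨hip, hiA⟩, -⟩ := hA T hT hTs k
    ext j
    rw [hfh T hT hTs k i hip hiA]
    exact and_congr_left fun hjk => (hstar T hT hTs k i hip hiA j hjk).symm
  refine ⟨fun T hT hTs k => (hfh_eq T hT hTs k).trans_subset inter_subset_right,
    fun T hT hTs k l hkl => ?_, fun S T hS hT hSs hTs k l hkl hST => ?_, fun T hT hTs => ?_⟩
  · rw [hfh_eq T hT hTs k, hfh_eq T hT hTs l, inter_assoc, Iic_inter_Iic, inf_eq_right.2 hkl]
  · have hST' : Trestrict S (n k) ⊆ Trestrict T (n k) := fun b hb => ⟨(hST hb).1, hb.2⟩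
    calc fh (Trestrict S (n k))
        = f (maxBr (Ttil ∩ BhatKI B (n k) (Trestrict S (n k)))) ∩ Iic k := hfh_local S hS hSs k
      _ ⊆ f (maxBr (Ttil ∩ BhatKI B (n k) (Trestrict T (n k)))) ∩ Iic k :=
          inter_subset_inter_left _ (hfmono _ _ (maxBr_inter_BhatKI_mono hB.1 hUc hTtil hST'))
      _ = f (maxBr T) ∩ Iic k := by rw [← hfh_local T hT hTs k, hfh_eq T hT hTs k]
      _ ⊆ f (maxBr T) ∩ Iic l := inter_subset_inter_right _ (Iic_subset_Iic.2 hkl)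
      _ = fh (Trestrict T (n l)) := (hfh_eq T hT hTs l).symm
  · simp_rw [hfh_eq T hT hTs, ← inter_iUnion, iUnion_Iic, inter_univ]

/-- Claim 1 of the proof of Theorem 4.4: under property (⊛), the map
`f̂(T↾n_k) := f([T̃ ∩ B̂^{n_k}_i]) ∩ (k+1)` (where `A_i = T↾n_k`) is level
preserving, end-extension preserving, monotone, and generates `f` on the
`U⃗`-trees contained in `T̃`. -/
theorem circledast_implies_basic
    (B : Set (Finset ℕ)) (hB : IsFlatTop Set.univ B)
    (Uc : Finset ℕ → Ultrafilter ℕ) (hUc : ∀ c, NonPrincipal (Uc c))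
    (Ttil : Set (Finset ℕ)) (hTtil : IsUTree B Uc Ttil)
    (f : Set (Finset ℕ) → Set ℕ)
    (hfmono : ∀ X Y : Set (Finset ℕ), X ⊆ Y → f X ⊆ f Y)
    (n : ℕ → ℕ) (hn : StrictMono n)
    (A : ℕ → Set (Finset ℕ)) (p : ℕ → ℕ)
    (hA : ∀ T : Set (Finset ℕ), IsUTree B Uc T → T ⊆ Ttil → ∀ k : ℕ,
      ∃! i : ℕ, i < p (n k) ∧ A i = Trestrict T (n k))
    (hstar : ∀ T : Set (Finset ℕ), IsUTree B Uc T → T ⊆ Ttil → ∀ k : ℕ,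
      ∀ i : ℕ, i < p (n k) → A i = Trestrict T (n k) → ∀ j ≤ k,
        (j ∈ f (maxBr T) ↔ j ∈ f (maxBr (Ttil ∩ BhatKI B (n k) (A i)))))
    (fh : Set (Finset ℕ) → Set ℕ)
    (hfh : ∀ T : Set (Finset ℕ), IsUTree B Uc T → T ⊆ Ttil → ∀ k : ℕ,
      ∀ i : ℕ, i < p (n k) → A i = Trestrict T (n k) →
        fh (Trestrict T (n k)) =
          f (maxBr (Ttil ∩ BhatKI B (n k) (A i))) ∩ Set.Iic k) :
    (∀ T : Set (Finset ℕ), IsUTree B Uc T → T ⊆ Ttil → ∀ k : ℕ,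
      fh (Trestrict T (n k)) ⊆ Set.Iic k) ∧
    (∀ T : Set (Finset ℕ), IsUTree B Uc T → T ⊆ Ttil → ∀ k l : ℕ, k ≤ l →
      fh (Trestrict T (n k)) = fh (Trestrict T (n l)) ∩ Set.Iic k) ∧
    (∀ S T : Set (Finset ℕ), IsUTree B Uc S → IsUTree B Uc T →
      S ⊆ Ttil → T ⊆ Ttil → ∀ k l : ℕ, k ≤ l →
        Trestrict S (n k) ⊆ Trestrict T (n l) →
        fh (Trestrict S (n k)) ⊆ fh (Trestrict T (n l))) ∧
    (∀ T : Set (Finset ℕ), IsUTree B Uc T → T ⊆ Ttil →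
      f (maxBr T) = ⋃ k : ℕ, fh (Trestrict T (n k))) :=
  circledast_implies_basic_general B hB Uc hUc Ttil hTtil f hfmono n A p hA hstar fh hfh
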